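/- Let h(t) be a real polynomial of degree s ≤ d with nonnegative coefficients satisfying Property (S), let r ≥ d+1-s be an integer, and let (p̃, q̃) be the symmetric decomposition of U_r^{d+1}h(t) with respect to d. Then q̃ has only nonnegative coefficients. -/

import Mathlib

open Polynomial

/-- The geometric polynomial `1 + t + ⋯ + t^{r-1}`. -/
noncomputable def geomPoly (r : ℕ) : ℝ[X] := ∑ j ∈ Finset.range r, X ^ j

/-- `sect r i f` is the polynomial `f^{⟨r,i⟩}` whose `n`-th coefficient is the `(r*n+i)`-th
coefficient of `f` (valid definition for `r ≥ 1`). -/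
noncomputable def sect (r i : ℕ) (f : ℝ[X]) : ℝ[X] :=
  ∑ n ∈ Finset.range (f.natDegree + 1), C (f.coeff (r * n + i)) * X ^ n

/-- The operator `U_r^D h = (h·(1+t+⋯+t^{r-1})^D)^{⟨r,0⟩}`. -/
noncomputable def Uop (r D : ℕ) (h : ℝ[X]) : ℝ[X] := sect r 0 (h * geomPoly r ^ D)

/-- `(p, q)` is the symmetric decomposition of `h` with respect to `d`. -/
def IsSymmDecomp (d : ℕ) (h p q : ℝ[X]) : Prop :=
  h = p + X * q ∧
  p.natDegree ≤ d ∧ (∀ i ≤ d, p.coeff i = p.coeff (d - i)) ∧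
  q.natDegree ≤ d - 1 ∧ (∀ i ≤ d - 1, q.coeff i = q.coeff (d - 1 - i))

/-- A real polynomial is real-rooted if it is zero or all of its complex roots are real. -/
def RealRooted (f : ℝ[X]) : Prop :=
  f = 0 ∨ ∀ z : ℂ, aeval z f = 0 → z.im = 0

/-- The real roots of `f`, with multiplicity, in weakly decreasing order. -/
noncomputable def descRoots (f : ℝ[X]) : List ℝ := (f.roots.sort (· ≤ ·)).reverse

/-- `Interlaces f g` means `f ⪯ g`: both are real-rooted and, unless one of them is zero,
the decreasingly ordered root lists `s` of `f` and `t` of `g` satisfy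
`⋯ ≤ s_2 ≤ t_2 ≤ s_1 ≤ t_1` (with `deg g = deg f` or `deg f + 1`). -/
def Interlaces (f g : ℝ[X]) : Prop :=
  RealRooted f ∧ RealRooted g ∧
  (f = 0 ∨ g = 0 ∨
    (((descRoots g).length = (descRoots f).length ∨
      (descRoots g).length = (descRoots f).length + 1) ∧
     (∀ i, (hf : i < (descRoots f).length) → (hg : i < (descRoots g).length) →
        (descRoots f).get ⟨i, hf⟩ ≤ (descRoots g).get ⟨i, hg⟩) ∧
     (∀ i, (hg : i + 1 < (descRoots g).length) → (hf : i < (descRoots f).length) →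
        (descRoots g).get ⟨i + 1, hg⟩ ≤ (descRoots f).get ⟨i, hf⟩)))

/-- The coefficient of `h` at an integer index, zero for negative indices. -/
noncomputable def coeffZ (h : ℝ[X]) (j : ℤ) : ℝ := if 0 ≤ j then h.coeff j.toNat else 0

/-- Property (H): `h_0 + ⋯ + h_i ≥ h_d + h_{d-1} + ⋯ + h_{d-i+1}` for all `i`. -/
def PropH (d : ℕ) (h : ℝ[X]) : Prop :=
  ∀ i : ℕ, ∑ j ∈ Finset.range i, coeffZ h ((d : ℤ) - j) ≤ ∑ j ∈ Finset.range (i + 1), h.coeff j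

/-- Property (S): `h_0 + ⋯ + h_i ≤ h_s + h_{s-1} + ⋯ + h_{s-i}` for all `i`. -/
def PropS (s : ℕ) (h : ℝ[X]) : Prop :=
  ∀ i : ℕ, ∑ j ∈ Finset.range (i + 1), h.coeff j ≤ ∑ j ∈ Finset.range (i + 1), coeffZ h ((s : ℤ) - j)

/-!
Let `P = h · (1 + ⋯ + t^{r-1})^d` and let `C m` be the sum of the coefficients of `P` in degrees
`< m`. Since `U_r^{d+1} h = (P · (1 + ⋯ + t^{r-1}))^{⟨r,0⟩}`, its coefficients are window sums of `P`
over the blocks `(r(n-1), rn]`, so its partial sums are values of `C`; the symmetric decomposition then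
gives `q̃_i = P(1) - C (r(d-1-i) + 1) - C (ri + 1)` for `i < d`, while for `i ≥ d` the coefficient
`q̃_i` is a coefficient of `U_r^{d+1} h`, hence nonnegative.

Property (S) says that the partial sums of `h` are dominated by those of its reversal `t^s h(1/t)`.
Multiplying by the palindromic polynomial `(1 + ⋯ + t^{r-1})^d`, whose coefficients are nonnegative,
preserves this domination, so `C u ≤ C' u`, where `C'` is `C` for the reversal of `P` with respect to
`M = s + (r-1)d`. Monotonicity of `C'` and `C' (M + 1 - v) = P(1) - C v` give `C u + C v ≤ P(1)`
whenever `u + v ≤ M + 1`, and `r ≥ d + 1 - s` is exactly what this needs for `u = ri + 1`,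
`v = r(d-1-i) + 1`.
-/

lemma coeff_geomPoly (r n : ℕ) : (geomPoly r).coeff n = if n < r then 1 else 0 := by
  simp [geomPoly, finsetSum_coeff, coeff_X_pow]

lemma natDegree_geomPoly_le (r : ℕ) : (geomPoly r).natDegree ≤ r - 1 :=
  natDegree_le_iff_coeff_eq_zero.mpr fun n hn => by
    rw [coeff_geomPoly, if_neg (by omega)]

lemma coeff_geomPoly_nonneg (r n : ℕ) : 0 ≤ (geomPoly r).coeff n := by
  rw [coeff_geomPoly]; split_ifs <;> norm_num

lemma reflect_geomPoly (r : ℕ) : reflect (r - 1) (geomPoly r) = geomPoly r := by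
  ext n
  rw [coeff_reflect, coeff_geomPoly, coeff_geomPoly]
  rcases le_or_gt n (r - 1) with hn | hn
  · rw [revAt_le hn]
    congr 1
    simp only [eq_iff_iff]
    omega
  · rw [revAt_eq_self_of_lt hn]

lemma natDegree_geomPoly_pow_le (r D : ℕ) : (geomPoly r ^ D).natDegree ≤ (r - 1) * D :=
  natDegree_pow_le_of_le D (natDegree_geomPoly_le r) |>.trans_eq (mul_comm _ _)

lemma reflect_geomPoly_pow (r D : ℕ) :
    reflect ((r - 1) * D) (geomPoly r ^ D) = geomPoly r ^ D := by
  induction D with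
  | zero => simp
  | succ D ih =>
    rw [pow_succ, mul_add_one,
      reflect_mul _ _ (natDegree_geomPoly_pow_le r D) (natDegree_geomPoly_le r), ih,
      reflect_geomPoly]

lemma coeff_mul_nonneg {f g : ℝ[X]} (hf : ∀ n, 0 ≤ f.coeff n) (hg : ∀ n, 0 ≤ g.coeff n)
    (n : ℕ) : 0 ≤ (f * g).coeff n := by
  rw [coeff_mul]
  exact Finset.sum_nonneg fun _ _ => mul_nonneg (hf _) (hg _)

lemma coeff_geomPoly_pow_nonneg (r D n : ℕ) : 0 ≤ (geomPoly r ^ D).coeff n := by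
  induction D generalizing n with
  | zero => rw [pow_zero, coeff_one]; split_ifs <;> norm_num
  | succ D ih => rw [pow_succ]; exact coeff_mul_nonneg ih (coeff_geomPoly_nonneg r) n

lemma coeff_sect {r : ℕ} (hr : 0 < r) (i : ℕ) (f : ℝ[X]) (n : ℕ) :
    (sect r i f).coeff n = f.coeff (r * n + i) := by
  simp only [sect, finsetSum_coeff, coeff_C_mul_X_pow, Finset.sum_ite_eq, Finset.mem_range]
  split_ifs with hn
  · rfl
  · refine (coeff_eq_zero_of_natDegree_lt ?_).symm
    nlinarith

noncomputable def coeffSum (f : ℝ[X]) (n : ℕ) : ℝ := ∑ k ∈ Finset.range n, f.coeff k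

lemma coeffSum_succ (f : ℝ[X]) (n : ℕ) : coeffSum f (n + 1) = coeffSum f n + f.coeff n :=
  Finset.sum_range_succ _ _

lemma coeffSum_mono {f : ℝ[X]} (hf : ∀ n, 0 ≤ f.coeff n) : Monotone (coeffSum f) :=
  fun _ _ hmn => Finset.sum_le_sum_of_subset_of_nonneg (Finset.range_subset_range.mpr hmn)
    fun k _ _ => hf k

lemma coeffSum_eq_eval_one {f : ℝ[X]} {n : ℕ} (hn : f.natDegree < n) : coeffSum f n = f.eval 1 := by
  simp [coeffSum, eval_eq_sum_range' hn]

lemma coeff_mul_geomPoly (f : ℝ[X]) (r m : ℕ) :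
    (f * geomPoly r).coeff m = coeffSum f (m + 1) - coeffSum f (m + 1 - r) := by
  induction r with
  | zero => simp [geomPoly]
  | succ r ih =>
    rw [geomPoly, Finset.sum_range_succ, mul_add, coeff_add, ← geomPoly, ih, coeff_mul_X_pow']
    split_ifs with hr
    · rw [show m + 1 - r = (m - r) + 1 by omega, coeffSum_succ f (m - r),
        show m + 1 - (r + 1) = m - r by omega]
      ring
    · rw [show m + 1 - r = 0 by omega, show m + 1 - (r + 1) = 0 by omega]
      ring

lemma coeffSum_sect_mul_geomPoly {r : ℕ} (hr : 0 < r) (f : ℝ[X]) (n : ℕ) :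
    coeffSum (sect r 0 (f * geomPoly r)) (n + 1) = coeffSum f (r * n + 1) := by
  induction n with
  | zero =>
    simp [coeff_sect hr, coeff_mul_geomPoly, Nat.sub_eq_zero_of_le hr, coeffSum]
  | succ n ih =>
    rw [coeffSum_succ, ih, coeff_sect hr, coeff_mul_geomPoly,
      show r * (n + 1) + 0 + 1 - r = r * n + 1 by rw [mul_add_one]; omega, mul_add_one]
    ring_nf

lemma coeffSum_mul_succ (f g : ℝ[X]) (n : ℕ) :
    coeffSum (f * g) (n + 1) =
      ∑ p ∈ Finset.HasAntidiagonal.antidiagonal n, coeffSum f (p.1 + 1) * g.coeff p.2 := by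
  induction n with
  | zero => simp [coeffSum]
  | succ n ih =>
    have hstep (p : ℕ × ℕ) : coeffSum f (p.1 + 1 + 1) * g.coeff p.2 =
        coeffSum f (p.1 + 1) * g.coeff p.2 + f.coeff (p.1 + 1) * g.coeff p.2 := by
      rw [coeffSum_succ, add_mul]
    rw [coeffSum_succ, ih, coeff_mul]
    simp only [Finset.Nat.sum_antidiagonal_succ, hstep, Finset.sum_add_distrib, zero_add,
      coeffSum_succ f 0]
    simp only [coeffSum, Finset.range_zero, Finset.sum_empty]
    ring

lemma coeffSum_mul_le_coeffSum_mul {f g b : ℝ[X]} (hfg : ∀ n, coeffSum f n ≤ coeffSum g n)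
    (hb : ∀ n, 0 ≤ b.coeff n) (n : ℕ) : coeffSum (f * b) n ≤ coeffSum (g * b) n := by
  cases n with
  | zero => simp [coeffSum]
  | succ n =>
    rw [coeffSum_mul_succ, coeffSum_mul_succ]
    exact Finset.sum_le_sum fun p _ => mul_le_mul_of_nonneg_right (hfg _) (hb _)

lemma coeffSum_reflect_add_coeffSum (f : ℝ[X]) {M k n : ℕ} (hkn : k + n = M + 1) :
    coeffSum (reflect M f) k + coeffSum f n = coeffSum f (M + 1) := by
  induction k generalizing n with
  | zero => simp [coeffSum, ← hkn]
  | succ k ih =>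
    rw [coeffSum_succ, coeff_reflect, revAt_le (by omega), ← ih (n := n + 1) (by omega),
      coeffSum_succ f n, show M - k = n by omega]
    ring

lemma coeffZ_sub_eq_coeff_reflect {h : ℝ[X]} {s : ℕ} (hdeg : h.natDegree ≤ s) (j : ℕ) :
    coeffZ h ((s : ℤ) - j) = (reflect s h).coeff j := by
  rw [coeffZ, coeff_reflect]
  rcases le_or_gt j s with hj | hj
  · rw [if_pos (by omega), revAt_le hj]
    congr 1
    omega
  · rw [if_neg (by omega), revAt_eq_self_of_lt hj, coeff_eq_zero_of_natDegree_lt (by omega)]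

lemma PropS.coeffSum_le_coeffSum_reflect {h : ℝ[X]} {s : ℕ} (hS : PropS s h)
    (hdeg : h.natDegree ≤ s) (n : ℕ) : coeffSum h n ≤ coeffSum (reflect s h) n := by
  cases n with
  | zero => simp [coeffSum]
  | succ n =>
    simpa only [coeffSum, coeffZ_sub_eq_coeff_reflect hdeg] using hS n

lemma PropS.coeffSum_mul_geomPoly_pow_le {h : ℝ[X]} {s : ℕ} (hS : PropS s h)
    (hdeg : h.natDegree ≤ s) (r D n : ℕ) :
    coeffSum (h * geomPoly r ^ D) n ≤
      coeffSum (reflect (s + (r - 1) * D) (h * geomPoly r ^ D)) n := by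
  rw [reflect_mul _ _ hdeg (natDegree_geomPoly_pow_le r D), reflect_geomPoly_pow]
  exact coeffSum_mul_le_coeffSum_mul (hS.coeffSum_le_coeffSum_reflect hdeg)
    (coeff_geomPoly_pow_nonneg r D) n

lemma coeffSum_add_coeffSum_le {f : ℝ[X]} {M u v : ℕ} (hf : ∀ n, 0 ≤ f.coeff n)
    (hrev : ∀ n, coeffSum f n ≤ coeffSum (reflect M f) n) (huv : u + v ≤ M + 1) :
    coeffSum f u + coeffSum f v ≤ coeffSum f (M + 1) := by
  have hrev_nonneg (n : ℕ) : 0 ≤ (reflect M f).coeff n := by rw [coeff_reflect]; exact hf _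
  calc coeffSum f u + coeffSum f v ≤ coeffSum (reflect M f) (M + 1 - v) + coeffSum f v := by
        gcongr
        exact (hrev u).trans (coeffSum_mono hrev_nonneg (by omega))
    _ = coeffSum f (M + 1) := coeffSum_reflect_add_coeffSum f (by omega)

namespace IsSymmDecomp

variable {d : ℕ} {f p q : ℝ[X]}

lemma coeff_snd_of_le (hpq : IsSymmDecomp d f p q) {i : ℕ} (hi : d ≤ i) :
    q.coeff i = f.coeff (i + 1) := by
  obtain ⟨rfl, hp, -⟩ := hpq
  rw [coeff_add, coeff_X_mul, coeff_eq_zero_of_natDegree_lt (p := p) (by omega), zero_add]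

lemma coeff_sub_coeff (hpq : IsSymmDecomp d f p q) {j : ℕ} (hj : j < d) :
    f.coeff (d - j) - f.coeff j = q.coeff j - (X * q).coeff j := by
  obtain ⟨rfl, -, hp, -, hq⟩ := hpq
  rw [coeff_add, coeff_add, show d - j = (d - 1 - j) + 1 by omega, coeff_X_mul,
    ← hq j (by omega), show d - 1 - j + 1 = d - j by omega, ← hp j hj.le]
  ring

lemma coeff_snd_of_lt (hpq : IsSymmDecomp d f p q) {i : ℕ} (hi : i < d) :
    q.coeff i = coeffSum f (d + 1) - coeffSum f (d - i) - coeffSum f (i + 1) := by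
  induction i with
  | zero =>
    have hstep := hpq.coeff_sub_coeff hi
    rw [coeff_X_mul_zero, sub_zero] at hstep
    rw [← hstep, coeffSum_succ, Nat.sub_zero, coeffSum_succ f 0]
    simp [coeffSum]
  | succ i ih =>
    have hstep := hpq.coeff_sub_coeff hi
    rw [coeff_X_mul, ih (by omega), show d - i = (d - (i + 1)) + 1 by omega,
      coeffSum_succ f (d - (i + 1))] at hstep
    rw [coeffSum_succ f (i + 1)]
    linarith

end IsSymmDecomp

theorem statement5_general (d s : ℕ) (h : ℝ[X]) (hdeg : h.natDegree = s)
    (hsd : s ≤ d) (hnn : ∀ i, 0 ≤ h.coeff i) (hS : PropS s h)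
    (r : ℕ) (hr : d + 1 - s ≤ r)
    (pt qt : ℝ[X]) (hpq : IsSymmDecomp d (Uop r (d + 1) h) pt qt) :
    ∀ i, 0 ≤ qt.coeff i := by
  have hr0 : 0 < r := by omega
  have hb := coeff_geomPoly_pow_nonneg r d
  have hU : Uop r (d + 1) h = sect r 0 (h * geomPoly r ^ d * geomPoly r) := by
    rw [Uop, pow_succ, mul_assoc]
  intro i
  rcases le_or_gt d i with hi | hi
  · rw [hpq.coeff_snd_of_le hi, hU, coeff_sect hr0]
    exact coeff_mul_nonneg (coeff_mul_nonneg hnn hb) (coeff_geomPoly_nonneg r) _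
  obtain ⟨k, hk⟩ : ∃ k, d = i + k + 1 := ⟨d - i - 1, by omega⟩
  have hrd : r * d = (r - 1) * d + d := by rw [← Nat.succ_mul, Nat.succ_eq_add_one, Nat.sub_add_cancel hr0]
  have hrik : r * d = r * i + r * k + r := by rw [hk]; ring
  have htot : coeffSum (h * geomPoly r ^ d) (r * d + 1) =
      coeffSum (h * geomPoly r ^ d) (s + (r - 1) * d + 1) := by
    have hdeg' := natDegree_mul_le.trans (add_le_add hdeg.le (natDegree_geomPoly_pow_le r d))
    rw [coeffSum_eq_eval_one, coeffSum_eq_eval_one] <;> omega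
  rw [hpq.coeff_snd_of_lt hi, show d - i = k + 1 by omega, hU, coeffSum_sect_mul_geomPoly hr0,
    coeffSum_sect_mul_geomPoly hr0, coeffSum_sect_mul_geomPoly hr0, htot]
  have := coeffSum_add_coeffSum_le (coeff_mul_nonneg hnn hb)
    (hS.coeffSum_mul_geomPoly_pow_le hdeg.le r d) (u := r * k + 1) (v := r * i + 1) (by omega)
  linarith

/-- If `h` has degree `s ≤ d`, nonnegative coefficients and satisfies
Property (S), then for `r ≥ d+1-s` the second part `q̃` of the symmetric decomposition of
`U_r^{d+1} h` has only nonnegative coefficients. -/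
theorem statement5 (d s : ℕ) (h : ℝ[X]) (hne : h ≠ 0) (hdeg : h.natDegree = s)
    (hsd : s ≤ d) (hnn : ∀ i, 0 ≤ h.coeff i) (hS : PropS s h)
    (r : ℕ) (hr : d + 1 - s ≤ r)
    (pt qt : ℝ[X]) (hpq : IsSymmDecomp d (Uop r (d + 1) h) pt qt) :
    ∀ i, 0 ≤ qt.coeff i :=
  statement5_general d s h hdeg hsd hnn hS r hr pt qt hpq
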